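/- The only subspaces of R invariant under all of the operators E_n, H_n, F_n (n ∈ ℤ) are {0} and R itself if and only if J ≠ 0. (This is the K = 0 quotient of the Bernard–Felder realization: the quotient module is irreducible if and only if J ≠ 0.) -/

import Mathlib

open MvPolynomial

/-- The ring `R = ℂ[x_m : m ∈ ℤ]`. -/
abbrev RSpace : Type := MvPolynomial ℤ ℂ

/-- `F_n` : multiplication by `x_n`.  (Applied to each polynomial, all the sums
appearing below are finite, so `∑ᶠ` computes the intended operators.) -/
noncomputable def Fop (n : ℤ) : RSpace → RSpace := fun q => X n * q

/-- `H_n = −2 Σ_{m∈ℤ} x_{n+m} ∂_m + δ_{n,0} J · id`. -/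
noncomputable def Hop (J : ℂ) (n : ℤ) : RSpace → RSpace := fun q =>
  -((2 : ℂ) • ∑ᶠ m : ℤ, X (n + m) * pderiv m q) + (if n = 0 then J else 0) • q

/-- `E_n = −Σ_{m,k∈ℤ} x_{n+m+k} ∂_m ∂_k + J ∂_{−n}`. -/
noncomputable def Eop (J : ℂ) (n : ℤ) : RSpace → RSpace := fun q =>
  -(∑ᶠ mk : ℤ × ℤ, X (n + mk.1 + mk.2) * pderiv mk.1 (pderiv mk.2 q))
    + J • pderiv (-n) q

/-!
For `J = 0` every operator maps `R` into the augmentation ideal (polynomials without constant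
term), which is a proper nonzero invariant subspace.

For `J ≠ 0`, each `E_n` lowers the total degree, so a nonzero invariant subspace contains a
nonzero `p` with `E_n p = 0` for all `n`. Differentiating `E_n p` in a variable `x_M` that does not
occur in `p` isolates `Σ_{m+k=u} ∂_m ∂_k p` with `u = M - n`, so all these second-order operators
kill `p`; then `E_n p = J ∂_{-n} p`, hence `p` is a nonzero constant. So the subspace contains `1`,
and multiplication by the `x_n` generates all of `R` from it.
-/

namespace MvPolynomial

variable {σ R : Type*}

section CommSemiring

variable [CommSemiring R]

theorem vars_pderiv_subset (i : σ) (p : MvPolynomial σ R) : (pderiv i p).vars ⊆ p.vars := by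
  classical
  intro x hx
  obtain ⟨d, hd, hdx⟩ := (mem_vars_iff_mem_support x).1 hx
  rw [mem_support_iff, coeff_pderiv] at hd
  refine (mem_vars_iff_mem_support x).2
    ⟨d + Finsupp.single i 1, mem_support_iff.2 (left_ne_zero_of_mul hd), ?_⟩
  rw [Finsupp.mem_support_iff] at hdx ⊢
  simp [hdx]

theorem totalDegree_pderiv_lt {i : σ} {p : MvPolynomial σ R} (h : pderiv i p ≠ 0) :
    (pderiv i p).totalDegree < p.totalDegree := by
  have hlt : ∀ d ∈ (pderiv i p).support, (d.sum fun _ e => e) < p.totalDegree := by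
    intro d hd
    rw [mem_support_iff, coeff_pderiv] at hd
    have := le_totalDegree (mem_support_iff.2 (left_ne_zero_of_mul hd))
    rw [Finsupp.sum_add_index' (fun _ => rfl) (fun _ _ _ => rfl),
      Finsupp.sum_single_index rfl] at this
    omega
  obtain ⟨d, hd⟩ := support_nonempty.2 h
  exact (Finset.sup_lt_iff ((Nat.zero_le _).trans_lt (hlt d hd))).2 hlt

theorem eq_top_of_one_mem_of_forall_X_mul_mem {N : Submodule R (MvPolynomial σ R)}
    (h1 : 1 ∈ N) (hX : ∀ i, ∀ p ∈ N, X i * p ∈ N) : N = ⊤ := by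
  rw [Submodule.eq_top_iff']
  intro p
  induction p using MvPolynomial.induction_on with
  | C a => simpa [smul_eq_C_mul] using N.smul_mem a h1
  | add p q hp hq => exact N.add_mem hp hq
  | mul_X p i hp => simpa [mul_comm] using hX i p hp

theorem finsum_X_mul_mem_ker_constantCoeff {ι : Type*} (f : ι → σ) (g : ι → MvPolynomial σ R) :
    ∑ᶠ i, X (f i) * g i ∈ RingHom.ker (constantCoeff (σ := σ) (R := R)) :=
  finsum_induction _ (zero_mem _) (fun _ _ => add_mem) fun _ =>
    Ideal.mul_mem_right _ _ (by simp)

end CommSemiring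

theorem eq_C_of_forall_pderiv_eq_zero [CommRing R] [IsAddTorsionFree R] {p : MvPolynomial σ R}
    (h : ∀ i, pderiv i p = 0) : p = C (coeff 0 p) := by
  refine coe_injective σ R (MvPowerSeries.pderiv.ext (fun i => ?_) ?_)
  · rw [MvPowerSeries.pderiv_coe, MvPowerSeries.pderiv_coe, h, pderiv_C]
  · rw [← MvPowerSeries.coeff_zero_eq_constantCoeff_apply, coeff_coe, coe_C,
      MvPowerSeries.constantCoeff_C]

end MvPolynomial

theorem Eop_eq_sum (J : ℂ) (n : ℤ) (q : RSpace) :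
    Eop J n q = -(∑ mk ∈ q.vars ×ˢ q.vars, X (n + mk.1 + mk.2) * pderiv mk.1 (pderiv mk.2 q))
      + J • pderiv (-n) q := by
  rw [Eop, finsum_eq_sum_of_support_subset]
  intro mk hmk
  simp only [Function.mem_support] at hmk
  rw [Finset.coe_product, Set.mem_prod, Finset.mem_coe, Finset.mem_coe]
  constructor <;> by_contra h <;> apply hmk
  · rw [pderiv_eq_zero_of_notMem_vars fun h' => h (vars_pderiv_subset _ _ h'), mul_zero]
  · rw [pderiv_eq_zero_of_notMem_vars h, map_zero, mul_zero]

theorem pderiv_Eop_of_notMem_vars {q : RSpace} {M : ℤ} (hM : M ∉ q.vars) (J : ℂ) (n : ℤ) :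
    pderiv M (Eop J n q)
      = -∑ mk ∈ q.vars ×ˢ q.vars with mk.1 + mk.2 = M - n, pderiv mk.1 (pderiv mk.2 q) := by
  have h1 : ∀ i, pderiv M (pderiv i q) = 0 := fun i =>
    pderiv_eq_zero_of_notMem_vars fun h => hM (vars_pderiv_subset _ _ h)
  have h2 : ∀ i j, pderiv M (pderiv i (pderiv j q)) = 0 := fun i j =>
    pderiv_eq_zero_of_notMem_vars fun h =>
      hM (vars_pderiv_subset _ _ (vars_pderiv_subset _ _ h))
  rw [Eop_eq_sum, map_add, map_neg, map_sum, Derivation.map_smul, h1, smul_zero, add_zero,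
    Finset.sum_filter]
  congr 1
  refine Finset.sum_congr rfl fun mk _ => ?_
  rw [pderiv_mul, h2, mul_zero, add_zero, pderiv_X, Pi.single_apply]
  by_cases h : mk.1 + mk.2 = M - n
  · rw [if_pos (by omega), if_pos h, one_mul]
  · rw [if_neg (by omega), if_neg h, zero_mul]

theorem totalDegree_Eop_lt {q : RSpace} (hq : 0 < q.totalDegree) (J : ℂ) (n : ℤ) :
    (Eop J n q).totalDegree < q.totalDegree := by
  have hderiv : ∀ i, (pderiv i q).totalDegree < q.totalDegree := fun i => by
    by_cases h : pderiv i q = 0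
    · simpa [h] using hq
    · exact totalDegree_pderiv_lt h
  have hterm : ∀ i j k, (X i * pderiv j (pderiv k q)).totalDegree < q.totalDegree := by
    intro i j k
    by_cases h : pderiv j (pderiv k q) = 0
    · simpa [h] using hq
    · calc _ ≤ 1 + (pderiv j (pderiv k q)).totalDegree := by
            simpa [totalDegree_X] using totalDegree_mul (X i) (pderiv j (pderiv k q))
        _ ≤ (pderiv k q).totalDegree := Nat.one_add_le_iff.2 (totalDegree_pderiv_lt h)
        _ < q.totalDegree := hderiv k
  rw [Eop_eq_sum]
  refine (totalDegree_add _ _).trans_lt (max_lt ?_ ((totalDegree_smul_le _ _).trans_lt (hderiv _)))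
  rw [totalDegree_neg]
  exact (totalDegree_finsetSum _ _).trans_lt ((Finset.sup_lt_iff hq).2 fun _ _ => hterm _ _ _)

theorem eq_C_of_forall_Eop_eq_zero {J : ℂ} (hJ : J ≠ 0) {q : RSpace}
    (hE : ∀ n, Eop J n q = 0) : q = C (coeff 0 q) := by
  obtain ⟨M, hM⟩ := Infinite.exists_notMem_finset q.vars
  have hΔ : ∀ u, ∑ mk ∈ q.vars ×ˢ q.vars with mk.1 + mk.2 = u,
      pderiv mk.1 (pderiv mk.2 q) = 0 := fun u => by
    simpa [hE] using (pderiv_Eop_of_notMem_vars hM J (M - u)).symm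
  have hsum : ∀ n, ∑ mk ∈ q.vars ×ˢ q.vars,
      X (n + mk.1 + mk.2) * pderiv mk.1 (pderiv mk.2 q) = 0 := by
    intro n
    rw [← Finset.sum_fiberwise_of_maps_to (g := fun mk => mk.1 + mk.2)
      fun mk hmk => Finset.mem_image_of_mem _ hmk]
    refine Finset.sum_eq_zero fun u _ => ?_
    calc _ = ∑ mk ∈ q.vars ×ˢ q.vars with mk.1 + mk.2 = u,
          X (n + u) * pderiv mk.1 (pderiv mk.2 q) :=
          Finset.sum_congr rfl fun mk hmk => by rw [add_assoc, (Finset.mem_filter.1 hmk).2]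
      _ = 0 := by rw [← Finset.mul_sum, hΔ, mul_zero]
  refine eq_C_of_forall_pderiv_eq_zero fun i => ?_
  have := hE (-i)
  rw [Eop_eq_sum, hsum, neg_zero, zero_add, neg_neg, smul_eq_zero] at this
  exact this.resolve_left hJ

theorem one_mem_of_Eop_invariant {J : ℂ} (hJ : J ≠ 0) {N : Submodule ℂ RSpace}
    (hE : ∀ n, ∀ q ∈ N, Eop J n q ∈ N) (hN : N ≠ ⊥) : (1 : RSpace) ∈ N := by
  obtain ⟨p, ⟨hpN, hp0⟩, hmin⟩ := (measure totalDegree).wf.has_min {p | p ∈ N ∧ p ≠ 0}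
    (Submodule.exists_mem_ne_zero_of_ne_bot hN)
  have hp : p = C (coeff 0 p) := by
    rcases Nat.eq_zero_or_pos p.totalDegree with h | h
    · exact totalDegree_eq_zero_iff_eq_C.1 h
    · exact eq_C_of_forall_Eop_eq_zero hJ fun n =>
        by_contra fun hne => hmin _ ⟨hE n p hpN, hne⟩ (totalDegree_Eop_lt h J n)
  have hc : coeff 0 p ≠ 0 := fun h => hp0 (by rw [hp, h, C_0])
  have := N.smul_mem (coeff 0 p)⁻¹ hpN
  rwa [hp, smul_eq_C_mul, ← C_mul, coeff_C, if_pos rfl, inv_mul_cancel₀ hc, C_1] at this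

theorem Eop_zero_mem_ker_constantCoeff (n : ℤ) (q : RSpace) :
    Eop 0 n q ∈ RingHom.ker (constantCoeff : RSpace →+* ℂ) := by
  rw [Eop, zero_smul, add_zero]
  exact neg_mem (finsum_X_mul_mem_ker_constantCoeff _ _)

theorem Hop_zero_mem_ker_constantCoeff (n : ℤ) (q : RSpace) :
    Hop 0 n q ∈ RingHom.ker (constantCoeff : RSpace →+* ℂ) := by
  rw [Hop, ite_self, zero_smul, add_zero]
  exact neg_mem (Submodule.smul_of_tower_mem _ _ (finsum_X_mul_mem_ker_constantCoeff _ _))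

theorem irreducible_iff_J_ne_zero (J : ℂ) :
    (∀ N : Submodule ℂ RSpace,
      (∀ n : ℤ, ∀ q ∈ N, Eop J n q ∈ N) →
      (∀ n : ℤ, ∀ q ∈ N, Hop J n q ∈ N) →
      (∀ n : ℤ, ∀ q ∈ N, Fop n q ∈ N) →
      N = ⊥ ∨ N = ⊤) ↔ J ≠ 0 := by
  constructor
  · rintro hirr rfl
    set I := (RingHom.ker (constantCoeff : RSpace →+* ℂ)).restrictScalars ℂ
    have hX : ∀ i (p : RSpace), X i * p ∈ I := fun i p =>
      Ideal.mul_mem_right _ _ (by simp)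
    rcases hirr I (fun n q _ => Eop_zero_mem_ker_constantCoeff n q)
      (fun n q _ => Hop_zero_mem_ker_constantCoeff n q) (fun n q _ => hX n q) with h | h
    · have := hX 0 1
      rw [h, Submodule.mem_bot, mul_one] at this
      exact X_ne_zero _ this
    · have : (1 : RSpace) ∈ I := h ▸ Submodule.mem_top
      simp [I] at this
  · intro hJ N hE _ hF
    exact or_iff_not_imp_left.2 fun hN =>
      eq_top_of_one_mem_of_forall_X_mul_mem (one_mem_of_Eop_invariant hJ hE hN) hF
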